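/- Let π: Σ_h → S² be a 2-fold branched covering of a closed genus h surface over the sphere, branched over a set B of 2h+2 points, and let γ ⊂ Σ_h be an embedded closed curve invariant under the covering involution ι. Then either (a) π(γ) is an embedded arc with endpoints on B and interior disjoint from B, and π restricted to γ is a 2-fold cover branched over the two endpoints, or (b) π(γ) is an embedded circle disjoint from B and π restricted to γ is an unbranched 2-fold cover. -/

import Mathlib

open scoped Topology

/-- The closed unit interval, as a model for embedded arcs. -/
def UnitInt : Set ℝ := Set.Icc 0 1

def UnitInt.zero : UnitInt := ⟨0, le_refl 0, zero_le_one⟩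
def UnitInt.one : UnitInt := ⟨1, zero_le_one, le_refl 1⟩

/-- A subset of a topological space is an embedded circle if (it is closed and)
it is homeomorphic to the standard circle `ℝ/ℤ`. -/
def IsEmbeddedCircle {X : Type*} [TopologicalSpace X] (s : Set X) : Prop :=
  IsClosed s ∧ Nonempty (s ≃ₜ AddCircle (1 : ℝ))

/-!
Parametrize `γ` by `𝕋 = ℝ/ℤ`; then `ι` becomes a continuous involution `f` of `𝕋` and `π(γ)` is
the quotient of `𝕋` by `f`. The involution is not the identity, since `γ` would then inject into
the finite set `B`. Lifting `f` to a self-map of `[0, 1)` and applying the intermediate value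
theorem to `f t - t`: if `f` has a fixed point, placed at `0`, then `f` is decreasing on `(0, 1)`
with exactly one more fixed point `q`, and `[0, q]` maps homeomorphically onto `π(γ)`, an arc
whose endpoints are the two branch points on it; if `f` is free, then `f` exchanges `(0, a)` and
`(a, 1)` where `a = f 0`, so `π(γ)` is `[0, a]` with its ends glued, a circle missing `B`.
-/

open Set Function

local notation "𝕋" => AddCircle (1 : ℝ)

noncomputable def circleRep (x : 𝕋) : ℝ := AddCircle.equivIco 1 0 x

lemma circleRep_mem (x : 𝕋) : circleRep x ∈ Ico 0 1 := by
  simpa [circleRep] using (AddCircle.equivIco 1 0 x).2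

@[simp] lemma coe_circleRep (x : 𝕋) : (circleRep x : 𝕋) = x := AddCircle.coe_equivIco

lemma continuousAt_circleRep {x : 𝕋} (hx : x ≠ 0) : ContinuousAt circleRep x :=
  continuousAt_subtype_val.comp (AddCircle.continuousAt_equivIco 1 0 (by simpa using hx))

lemma circleRep_pos {x : 𝕋} (hx : x ≠ 0) : 0 < circleRep x :=
  (circleRep_mem x).1.lt_of_ne fun h => hx (by rw [← coe_circleRep x, ← h]; rfl)

lemma eq_coe_of_circleRep_eq {x : 𝕋} {t : ℝ} (h : circleRep x = t) : x = t := by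
  rw [← coe_circleRep x, h]

lemma injOn_coe_Ico : InjOn ((↑) : ℝ → 𝕋) (Ico 0 1) := fun _ hs _ ht h =>
  (AddCircle.coe_eq_coe_iff_of_mem_Ico (a := 0) (by simpa using hs) (by simpa using ht)).mp h

theorem exists_apply_eq_self_of_apply_apply_eq {g : ℝ → ℝ} {I : Set ℝ} [I.OrdConnected]
    (hg : ContinuousOn g I) {t : ℝ} (ht : t ∈ I) (hgt : g t ∈ I) (hgg : g (g t) = t) :
    ∃ s ∈ I, g s = s := by
  have hsub : uIcc t (g t) ⊆ I := Set.OrdConnected.uIcc_subset ‹_› ht hgt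
  have hsign : (0 : ℝ) ∈ uIcc (g t - t) (g (g t) - g t) := by
    rw [hgg, mem_uIcc]
    rcases le_total (g t) t with h | h
    · exact .inl ⟨by linarith, by linarith⟩
    · exact .inr ⟨by linarith, by linarith⟩
  obtain ⟨s, hs, hs0⟩ := intermediate_value_uIcc ((hg.mono hsub).sub continuousOn_id) hsign
  exact ⟨s, hsub hs, sub_eq_zero.mp hs0⟩

lemma StrictMonoOn.apply_eq_self_of_apply_apply_eq {α : Type*} [LinearOrder α] {g : α → α}
    {I : Set α} (hg : StrictMonoOn g I) {t : α} (ht : t ∈ I) (hgt : g t ∈ I)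
    (hgg : g (g t) = t) : g t = t := by
  rcases lt_trichotomy (g t) t with h | h | h
  · have := hg hgt ht h
    rw [hgg] at this
    exact absurd this (lt_asymm h)
  · exact h
  · have := hg ht hgt h
    rw [hgg] at this
    exact absurd this (lt_asymm h)

def IsFundamentalArc (f : 𝕋 → 𝕋) (a : ℝ) : Prop :=
  (∀ x : 𝕋, ∃ t ∈ Icc 0 a, x = t ∨ x = f t) ∧ ∀ s ∈ Ioo 0 a, ∀ t ∈ Icc 0 a, f s ≠ t

section CircleInvolution

variable {f : 𝕋 → 𝕋}

lemma isFundamentalArc_of_swap (hff : Involutive f) {a : ℝ} (ha : a ∈ Ioo 0 1)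
    (hlow : ∀ t ∈ Ioo 0 a, ∃ u ∈ Ioo a 1, f t = u)
    (hhigh : ∀ t ∈ Ioo a 1, ∃ u ∈ Ioo 0 a, f t = u) : IsFundamentalArc f a := by
  refine ⟨fun x => ?_, fun s hs t ht hst => ?_⟩
  · obtain ⟨r, hr, rfl⟩ := AddCircle.eq_coe_Ico x
    rcases le_or_gt r a with hra | hra
    · exact ⟨r, ⟨hr.1, hra⟩, .inl rfl⟩
    · obtain ⟨u, hu, hfr⟩ := hhigh r ⟨hra, hr.2⟩
      exact ⟨u, Ioo_subset_Icc_self hu, .inr (by rw [← hfr, hff])⟩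
  · obtain ⟨u, hu, hfs⟩ := hlow s hs
    have hut : u = t := injOn_coe_Ico (Ioo_subset_Ico_self ⟨ha.1.trans hu.1, hu.2⟩)
      ⟨ht.1, ht.2.trans_lt ha.2⟩ (hfs.symm.trans hst)
    exact (hut ▸ hu.1).not_ge ht.2

lemma circleRep_apply_circleRep (hff : Involutive f) {t : ℝ} (ht : t ∈ Ico 0 1) :
    circleRep (f (circleRep (f t))) = t :=
  injOn_coe_Ico (circleRep_mem _) ht (by simp [hff t])

lemma continuousOn_circleRep_comp (hf : Continuous f) {I : Set ℝ} (hI : ∀ t ∈ I, f t ≠ 0) :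
    ContinuousOn (fun t : ℝ => circleRep (f t)) I := fun t ht =>
  ((continuousAt_circleRep (hI t ht)).comp (f := fun t : ℝ => f t)
    (hf.comp (AddCircle.continuous_mk' 1)).continuousAt).continuousWithinAt

theorem exists_isFundamentalArc_of_apply_zero (hf : Continuous f) (hff : Involutive f)
    (h0 : f 0 = 0) (hne : ∃ x, f x ≠ x) :
    ∃ q ∈ Ioo (0 : ℝ) 1, f q = q ∧ IsFundamentalArc f q := by
  set g : ℝ → ℝ := fun t => circleRep (f t)
  have hf0 : ∀ t ∈ Ioo (0 : ℝ) 1, f t ≠ 0 := fun t ht h =>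
    ht.1.ne' ((AddCircle.coe_eq_zero_iff_of_mem_Ico (Ioo_subset_Ico_self ht)).mp
      (hff.injective (h.trans h0.symm)))
  have hmaps : ∀ t ∈ Ioo (0 : ℝ) 1, g t ∈ Ioo (0 : ℝ) 1 := fun t ht =>
    ⟨circleRep_pos (hf0 t ht), (circleRep_mem _).2⟩
  have hgg : ∀ t ∈ Ioo (0 : ℝ) 1, g (g t) = t := fun t ht =>
    circleRep_apply_circleRep hff (Ioo_subset_Ico_self ht)
  have hcont : ContinuousOn g (Ioo 0 1) := continuousOn_circleRep_comp hf hf0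
  have hinj : InjOn g (Ioo 0 1) := fun s hs t ht h => by rw [← hgg s hs, ← hgg t ht, h]
  have hhalf : (1 / 2 : ℝ) ∈ Ioo 0 1 := by norm_num
  obtain ⟨q, hq, hgq⟩ := exists_apply_eq_self_of_apply_apply_eq hcont hhalf (hmaps _ hhalf)
    (hgg _ hhalf)
  have hfq : f q = q := eq_coe_of_circleRep_eq hgq
  rcases hcont.strictMonoOn_of_injOn_Ioo one_pos hinj with hmono | hanti
  · obtain ⟨x, hx⟩ := hne
    obtain ⟨r, hr, rfl⟩ := AddCircle.eq_coe_Ico x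
    rcases hr.1.eq_or_lt with rfl | hr0
    · exact absurd h0 hx
    have hr' : r ∈ Ioo (0 : ℝ) 1 := ⟨hr0, hr.2⟩
    exact (hx (eq_coe_of_circleRep_eq
      (hmono.apply_eq_self_of_apply_apply_eq hr' (hmaps r hr') (hgg r hr')))).elim
  · refine ⟨q, hq, hfq, isFundamentalArc_of_swap hff hq (fun t ht => ?_) (fun t ht => ?_)⟩
    · have ht' : t ∈ Ioo (0 : ℝ) 1 := ⟨ht.1, ht.2.trans hq.2⟩
      exact ⟨g t, ⟨hgq ▸ hanti ht' hq ht.2, (hmaps t ht').2⟩, (coe_circleRep _).symm⟩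
    · have ht' : t ∈ Ioo (0 : ℝ) 1 := ⟨hq.1.trans ht.1, ht.2⟩
      exact ⟨g t, ⟨(hmaps t ht').1, hgq ▸ hanti hq ht' ht.1⟩, (coe_circleRep _).symm⟩

theorem exists_isFundamentalArc_of_forall_ne (hf : Continuous f) (hff : Involutive f)
    (hfree : ∀ x, f x ≠ x) : ∃ a ∈ Ioo (0 : ℝ) 1, f 0 = a ∧ IsFundamentalArc f a := by
  set g : ℝ → ℝ := fun t => circleRep (f t)
  set a := g 0
  have hfa0 : f 0 = a := (coe_circleRep _).symm
  have ha : a ∈ Ioo (0 : ℝ) 1 := ⟨circleRep_pos (hfa0 ▸ hfree 0), (circleRep_mem _).2⟩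
  have havoid : ∀ t ∈ Ioo (0 : ℝ) 1, t ≠ a → f t ≠ 0 ∧ f t ≠ a := fun t ht hta =>
    ⟨fun h => hta (injOn_coe_Ico (Ioo_subset_Ico_self ht) (Ioo_subset_Ico_self ha)
        (by rw [← hfa0, ← h, hff])),
      fun h => ht.1.ne' ((AddCircle.coe_eq_zero_iff_of_mem_Ico (Ioo_subset_Ico_self ht)).mp
        (hff.injective (h.trans hfa0.symm)))⟩
  have hgavoid : ∀ t ∈ Ioo (0 : ℝ) 1, t ≠ a → g t ∈ Ioo (0 : ℝ) 1 ∧ g t ≠ a := fun t ht hta =>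
    ⟨⟨circleRep_pos (havoid t ht hta).1, (circleRep_mem _).2⟩,
      fun h => (havoid t ht hta).2 (eq_coe_of_circleRep_eq h)⟩
  have hescape : ∀ lo hi, Ioo lo hi ⊆ Ioo 0 1 → a ∉ Ioo lo hi →
      ∀ t ∈ Ioo lo hi, g t ∉ Ioo lo hi := by
    intro lo hi hsub hlohi t ht hgt
    have hcont : ContinuousOn g (Ioo lo hi) := continuousOn_circleRep_comp hf fun u hu =>
      (havoid u (hsub hu) fun h => hlohi (h ▸ hu)).1
    obtain ⟨s, -, hgs⟩ := exists_apply_eq_self_of_apply_apply_eq hcont ht hgt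
      (circleRep_apply_circleRep hff (Ioo_subset_Ico_self (hsub ht)))
    exact hfree s (eq_coe_of_circleRep_eq hgs)
  refine ⟨a, ha, hfa0, isFundamentalArc_of_swap hff ha (fun t ht => ?_) (fun t ht => ?_)⟩
  · have ht' : t ∈ Ioo (0 : ℝ) 1 := ⟨ht.1, ht.2.trans ha.2⟩
    obtain ⟨hgt, hgta⟩ := hgavoid t ht' ht.2.ne
    have hout := hescape 0 a (Ioo_subset_Ioo_right ha.2.le) (fun h => h.2.false) t ht
    refine ⟨g t, ⟨lt_of_not_ge fun h => hout ⟨hgt.1, h.lt_of_ne hgta⟩, hgt.2⟩,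
      (coe_circleRep _).symm⟩
  · have ht' : t ∈ Ioo (0 : ℝ) 1 := ⟨ha.1.trans ht.1, ht.2⟩
    obtain ⟨hgt, hgta⟩ := hgavoid t ht' ht.1.ne'
    have hout := hescape a 1 (Ioo_subset_Ioo_left ha.1.le) (fun h => h.1.false) t ht
    refine ⟨g t, ⟨hgt.1, lt_of_not_ge fun h => hout ⟨h.lt_of_ne' hgta, hgt.2⟩⟩,
      (coe_circleRep _).symm⟩

end CircleInvolution

section CircleQuotient

variable {Y : Type*} {p : 𝕋 → Y} {f : 𝕋 → 𝕋} {a : ℝ}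

lemma IsFundamentalArc.exists_mem_Icc_apply_eq (hfund : IsFundamentalArc f a)
    (hpf : ∀ x y, p x = p y ↔ y = x ∨ y = f x) (x : 𝕋) : ∃ t ∈ Icc 0 a, p x = p t := by
  obtain ⟨t, ht, rfl | rfl⟩ := hfund.1 x
  · exact ⟨t, ht, rfl⟩
  · exact ⟨t, ht, ((hpf _ _).2 (.inr rfl)).symm⟩

lemma exists_apply_ne_of_finite {B : Set Y} (hpf : ∀ x y, p x = p y ↔ y = x ∨ y = f x)
    (hpB : ∀ x, p x ∈ B ↔ f x = x) (hB : B.Finite) : ∃ x, f x ≠ x := by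
  by_contra! hid
  have hinj : Injective p := fun x y h => by
    rcases (hpf x y).1 h with h | h
    exacts [h.symm, (h.trans (hid x)).symm]
  have hsub : p '' ((↑) '' Ico (0 : ℝ) 1) ⊆ B :=
    (image_subset_range _ _).trans (range_subset_iff.2 fun x => (hpB x).2 (hid x))
  exact (((Ico_infinite one_pos).image injOn_coe_Ico).image hinj.injOn) (hB.subset hsub)

theorem exists_homeomorph_unitInt_of_isFundamentalArc [TopologicalSpace Y] [T2Space Y]
    {B : Set Y} (hp : Continuous p) (hpf : ∀ x y, p x = p y ↔ y = x ∨ y = f x)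
    (hpB : ∀ x, p x ∈ B ↔ f x = x) (ha : a ∈ Ioo 0 1) (h0 : f 0 = 0) (hfa : f a = a)
    (hfund : IsFundamentalArc f a) :
    ∃ e : UnitInt ≃ₜ range p, ((e UnitInt.zero : Y) ∈ B ∧ (e UnitInt.one : Y) ∈ B) ∧
      ∀ t : UnitInt, t ≠ UnitInt.zero → t ≠ UnitInt.one → (e t : Y) ∉ B := by
  have hIcc : Icc 0 a ⊆ Ico (0 : ℝ) 1 := Icc_subset_Ico_right ha.2
  have hinj : InjOn (fun t : ℝ => p t) (Icc 0 a) := by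
    intro s hs t ht hst
    rcases (hpf s t).1 hst with h | h
    · exact injOn_coe_Ico (hIcc hs) (hIcc ht) h.symm
    by_cases hs' : s ∈ Ioo 0 a
    · exact absurd h.symm (hfund.2 s hs' t ht)
    · have hfs : f s = s := by
        rcases eq_endpoints_or_mem_Ioo_of_mem_Icc hs with rfl | rfl | hs''
        exacts [h0, hfa, absurd hs'' hs']
      exact injOn_coe_Ico (hIcc hs) (hIcc ht) (h.trans hfs).symm
  have hscale : ∀ t : UnitInt, a * t ∈ Icc 0 a := fun t =>
    ⟨mul_nonneg ha.1.le t.2.1, mul_le_of_le_one_right ha.1.le t.2.2⟩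
  let φ : UnitInt → range p := fun t => ⟨p (a * t : ℝ), mem_range_self _⟩
  have hφ : Bijective φ := by
    refine ⟨fun s t hst => Subtype.ext ?_, ?_⟩
    · exact mul_left_cancel₀ ha.1.ne' (hinj (hscale s) (hscale t) (congrArg Subtype.val hst))
    · rintro ⟨_, x, rfl⟩
      obtain ⟨t, ht, hxt⟩ := hfund.exists_mem_Icc_apply_eq hpf x
      refine ⟨⟨t / a, div_nonneg ht.1 ha.1.le, div_le_one_of_le₀ ht.2 ha.1.le⟩, Subtype.ext ?_⟩
      simp only [φ, mul_div_cancel₀ t ha.1.ne', hxt]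
  have hφc : Continuous φ := (hp.comp ((AddCircle.continuous_mk' 1).comp
    (continuous_const.mul continuous_subtype_val))).subtype_mk _
  have : CompactSpace UnitInt := isCompact_iff_compactSpace.mp isCompact_Icc
  refine ⟨hφc.homeoOfEquivCompactToT2 (f := Equiv.ofBijective φ hφ), ⟨?_, ?_⟩, fun t ht0 ht1 => ?_⟩
  · exact (hpB _).2 (by simpa [UnitInt.zero] using h0)
  · exact (hpB _).2 (by simpa [UnitInt.one] using hfa)
  · have hat : a * t ∈ Ioo 0 a := ⟨mul_pos ha.1 (t.2.1.lt_of_ne fun h => ht0 (Subtype.ext h.symm)),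
      mul_lt_of_lt_one_right ha.1 (t.2.2.lt_of_ne fun h => ht1 (Subtype.ext h))⟩
    exact fun h => hfund.2 _ hat _ (Ioo_subset_Icc_self hat) ((hpB _).1 h)

theorem nonempty_homeomorph_of_isFundamentalArc [TopologicalSpace Y] [T2Space Y]
    (hp : Continuous p) (hpf : ∀ x y, p x = p y ↔ y = x ∨ y = f x) (ha : a ∈ Ioo 0 1)
    (h0 : f 0 = a) (hfund : IsFundamentalArc f a) : Nonempty (range p ≃ₜ 𝕋) := by
  let φ' : ℝ → range p := fun t => ⟨p (a * t : ℝ), mem_range_self _⟩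
  let φ : 𝕋 → range p := AddCircle.liftIco 1 0 φ'
  have hφ' : ∀ t ∈ Ico (0 : ℝ) 1, φ t = φ' t := fun t ht => AddCircle.liftIco_zero_coe_apply ht
  have hpa : p 0 = p a := (hpf 0 a).2 (.inr h0.symm)
  have hscale : ∀ t ∈ Ico (0 : ℝ) 1, a * t ∈ Ico 0 a := fun t ht =>
    ⟨mul_nonneg ha.1.le ht.1, mul_lt_of_lt_one_right ha.1 ht.2⟩
  have hφc : Continuous φ := by
    refine AddCircle.liftIco_zero_continuous (Subtype.ext ?_) (Continuous.continuousOn ?_)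
    · simpa [φ'] using hpa
    · exact (hp.comp ((AddCircle.continuous_mk' 1).comp
        (continuous_const.mul continuous_id))).subtype_mk _
  have hinj : Injective φ := by
    intro x y hxy
    obtain ⟨s, hs, rfl⟩ := AddCircle.eq_coe_Ico x
    obtain ⟨t, ht, rfl⟩ := AddCircle.eq_coe_Ico y
    rw [hφ' s hs, hφ' t ht] at hxy
    have hIco : Ico 0 a ⊆ Ico (0 : ℝ) 1 := Ico_subset_Ico_right ha.2.le
    suffices a * s = a * t from congrArg _ (mul_left_cancel₀ ha.1.ne' this)
    rcases (hpf _ _).1 (congrArg Subtype.val hxy) with h | h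
    · exact (injOn_coe_Ico (hIco (hscale t ht)) (hIco (hscale s hs)) h).symm
    rcases (hscale s hs).1.eq_or_lt with has | has
    · -- `s = 0` and `f 0 = a` would force `a * t = a`, impossible for `t < 1`
      rw [← has, AddCircle.coe_zero, h0] at h
      exact absurd (injOn_coe_Ico (hIco (hscale t ht)) (Ioo_subset_Ico_self ha) h)
        (hscale t ht).2.ne
    · exact absurd h.symm (hfund.2 _ ⟨has, (hscale s hs).2⟩ _
        (Ico_subset_Icc_self (hscale t ht)))
  have hsurj : Surjective φ := by
    rintro ⟨_, x, rfl⟩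
    obtain ⟨t, ht, hxt⟩ := hfund.exists_mem_Icc_apply_eq hpf x
    rcases ht.2.eq_or_lt with rfl | hta
    · refine ⟨0, (hφ' 0 ⟨le_rfl, one_pos⟩).trans (Subtype.ext ?_)⟩
      simpa [φ', hxt] using hpa
    · refine ⟨(t / a : ℝ), (hφ' _ ⟨div_nonneg ht.1 ha.1.le, (div_lt_one ha.1).2 hta⟩).trans
        (Subtype.ext ?_)⟩
      simp only [φ', mul_div_cancel₀ t ha.1.ne', hxt]
  exact ⟨(hφc.homeoOfEquivCompactToT2 (f := Equiv.ofBijective φ ⟨hinj, hsurj⟩)).symm⟩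

end CircleQuotient

section BranchedCover

variable {X Y : Type*}

lemma mem_image_setOf_apply_eq_iff {ι : X → X} {π : X → Y}
    (hfib : ∀ x y, π x = π y ↔ y = x ∨ y = ι x) {x : X} :
    π x ∈ π '' {x | ι x = x} ↔ ι x = x := by
  refine ⟨?_, fun hx => mem_image_of_mem π hx⟩
  rintro ⟨w, hw, hwx⟩
  rcases (hfib w x).1 hwx with rfl | rfl
  · exact hw
  · exact congrArg ι hw

lemma inter_preimage_singleton_eq_pair {ι : X → X} {π : X → Y}
    (hfib : ∀ x y, π x = π y ↔ y = x ∨ y = ι x) {γ : Set X} (hsym : ι '' γ = γ) {x : X}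
    (hx : x ∈ γ) : γ ∩ π ⁻¹' {π x} = {x, ι x} := by
  ext y
  simp only [mem_inter_iff, mem_preimage, mem_singleton_iff, mem_insert_iff]
  constructor
  · rintro ⟨-, hy⟩
    exact (hfib x y).1 hy.symm
  · rintro (rfl | rfl)
    · exact ⟨hx, rfl⟩
    · exact ⟨hsym ▸ mem_image_of_mem ι hx, ((hfib _ _).2 (.inr rfl)).symm⟩

lemma ncard_inter_preimage_singleton {ι : X → X} {π : X → Y}
    (hfib : ∀ x y, π x = π y ↔ y = x ∨ y = ι x) {γ : Set X} (hsym : ι '' γ = γ) :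
    ∀ z ∈ π '' γ, (z ∈ π '' {x | ι x = x} → (γ ∩ π ⁻¹' {z}).ncard = 1) ∧
      (z ∉ π '' {x | ι x = x} → (γ ∩ π ⁻¹' {z}).ncard = 2) := by
  rintro _ ⟨x, hx, rfl⟩
  rw [inter_preimage_singleton_eq_pair hfib hsym hx, mem_image_setOf_apply_eq_iff hfib]
  refine ⟨fun h => ?_, fun h => ncard_pair (Ne.symm h)⟩
  rw [h, pair_eq_singleton, ncard_singleton]

lemma exists_homeomorph_addCircle_symm_zero [TopologicalSpace X] (e₀ : X ≃ₜ 𝕋) (P : X → Prop) :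
    ∃ e : X ≃ₜ 𝕋, P (e.symm 0) ∨ ∀ x, ¬ P x := by
  by_cases h : ∃ x, P x
  · obtain ⟨x, hx⟩ := h
    refine ⟨e₀.trans (Homeomorph.addRight (-e₀ x)), .inl ?_⟩
    simpa [Homeomorph.addRight_symm] using hx
  · exact ⟨e₀, .inr (not_exists.1 h)⟩

lemma exists_involutive_of_homeomorph_addCircle [TopologicalSpace X] {ι : X ≃ₜ X}
    (hinv : ∀ x, ι (ι x) = x) {π : X → Y} (hfib : ∀ x y, π x = π y ↔ y = x ∨ y = ι x)
    {γ : Set X} (hsym : ι '' γ = γ) (e : γ ≃ₜ 𝕋) :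
    ∃ f : 𝕋 → 𝕋, Continuous f ∧ Involutive f ∧
      (∀ x y, π (e.symm x) = π (e.symm y) ↔ y = x ∨ y = f x) ∧
      ∀ x, f x = x ↔ ι (e.symm x) = e.symm x := by
  let σ : γ ≃ₜ γ := (ι.image γ).trans (Homeomorph.setCongr hsym)
  have hσ : ∀ y, (σ y : X) = ι y := fun _ => rfl
  have hσσ : ∀ y, σ (σ y) = y := fun y => Subtype.ext (by rw [hσ, hσ, hinv])
  refine ⟨e ∘ σ ∘ e.symm, e.continuous.comp (σ.continuous.comp e.symm.continuous),
    fun x => ?_, fun x y => ?_, fun x => ?_⟩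
  · simp only [comp_apply, Homeomorph.symm_apply_apply, hσσ, Homeomorph.apply_symm_apply]
  · simp only [hfib, ← hσ, Subtype.coe_inj, e.symm.injective.eq_iff, e.symm_apply_eq,
      comp_apply]
  · simp only [← hσ, Subtype.coe_inj, comp_apply, e.eq_symm_apply]

end BranchedCover

theorem stmt_1_general {Sh S2 : Type*} [TopologicalSpace Sh] [TopologicalSpace S2]
    [T2Space S2]
    (h : ℕ) (ι : Sh ≃ₜ Sh) (hinv : ∀ x, ι (ι x) = x)
    (π : C(Sh, S2))
    (hfib : ∀ x y : Sh, π x = π y ↔ (y = x ∨ y = ι x))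
    (B : Set S2) (hB : B = π '' {x | ι x = x}) (hBcard : B.ncard = 2 * h + 2)
    (γ : Set Sh) (hγ : IsEmbeddedCircle γ) (hsym : ι '' γ = γ) :
    (∃ e : UnitInt ≃ₜ (π '' γ : Set S2),
      ((e UnitInt.zero : S2) ∈ B ∧ (e UnitInt.one : S2) ∈ B) ∧
      (∀ t : UnitInt, t ≠ UnitInt.zero → t ≠ UnitInt.one → (e t : S2) ∉ B) ∧
      (∀ z ∈ π '' γ,
        (z ∈ B → (γ ∩ (⇑π) ⁻¹' {z}).ncard = 1) ∧
        (z ∉ B → (γ ∩ (⇑π) ⁻¹' {z}).ncard = 2)))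
    ∨ (IsEmbeddedCircle (π '' γ) ∧ Disjoint (π '' γ) B ∧
        ∀ z ∈ π '' γ, (γ ∩ (⇑π) ⁻¹' {z}).ncard = 2) := by
  obtain ⟨-, ⟨e₀⟩⟩ := hγ
  obtain ⟨e, he⟩ := exists_homeomorph_addCircle_symm_zero e₀ fun x : γ => ι x = x
  obtain ⟨f, hf, hff, hpf, hfix⟩ := exists_involutive_of_homeomorph_addCircle hinv hfib hsym e
  set p : 𝕋 → S2 := fun x => π (e.symm x)
  have hp : Continuous p := π.continuous.comp (continuous_subtype_val.comp e.symm.continuous)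
  have hrange : range p = π '' γ := by
    rw [← Subtype.range_coe (s := γ), ← range_comp, ← e.symm.surjective.range_comp]; rfl
  have hpB : ∀ x, p x ∈ B ↔ f x = x := fun x => by
    rw [hB, mem_image_setOf_apply_eq_iff hfib, hfix]
  have hcount := hB ▸ ncard_inter_preimage_singleton hfib hsym
  rcases he with h0 | hfree
  · have hf0 : f 0 = 0 := (hfix 0).2 h0
    have hne := exists_apply_ne_of_finite hpf hpB (finite_of_ncard_ne_zero (by omega))
    obtain ⟨q, hq, hfq, hfund⟩ := exists_isFundamentalArc_of_apply_zero hf hff hf0 hne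
    have harc := exists_homeomorph_unitInt_of_isFundamentalArc hp hpf hpB hq hf0 hfq hfund
    rw [hrange] at harc
    obtain ⟨E, hE⟩ := harc
    exact .inl ⟨E, hE.1, hE.2, hcount⟩
  · have hfree' : ∀ x, f x ≠ x := fun x hx => hfree _ ((hfix x).1 hx)
    obtain ⟨a, ha, hfa, hfund⟩ := exists_isFundamentalArc_of_forall_ne hf hff hfree'
    have hdisj : Disjoint (π '' γ) B :=
      hrange ▸ disjoint_left.2 (forall_mem_range.2 fun x hx => hfree' x ((hpB x).1 hx))
    refine .inr ⟨⟨hrange ▸ (isCompact_range hp).isClosed, ?_⟩, hdisj,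
      fun z hz => (hcount z hz).2 (disjoint_left.1 hdisj hz)⟩
    exact hrange ▸ nonempty_homeomorph_of_isFundamentalArc hp hpf ha hfa hfund

/-- Lemma 1, `curvelift`.
Let `π : Σ_h → S²` be the 2-fold branched covering given as the quotient of the
hyperelliptic involution `ι` (so the fibers of `π` are exactly the `ι`-orbits),
branched over the set `B` of `2h+2` images of fixed points of `ι`.  If
`γ ⊆ Σ_h` is an embedded closed curve invariant under `ι`, then either
(a) `π(γ)` is an embedded arc with endpoints on `B`, interior disjoint from `B`,
and `π` restricted to `γ` is a 2-fold cover branched over the two endpoints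
(one preimage point over each endpoint, two over every other point); or
(b) `π(γ)` is an embedded circle disjoint from `B` and `π` restricted to `γ` is
an unbranched 2-fold cover (two preimage points over every point). -/
theorem stmt_1 {Sh S2 : Type*} [TopologicalSpace Sh] [TopologicalSpace S2]
    [CompactSpace Sh] [T2Space Sh] [CompactSpace S2] [T2Space S2]
    [ConnectedSpace Sh] [ConnectedSpace S2]
    (h : ℕ) (ι : Sh ≃ₜ Sh) (hinv : ∀ x, ι (ι x) = x)
    (π : C(Sh, S2)) (hsurj : Function.Surjective π)
    (hquot : Topology.IsQuotientMap ⇑π)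
    (hfib : ∀ x y : Sh, π x = π y ↔ (y = x ∨ y = ι x))
    (B : Set S2) (hB : B = π '' {x | ι x = x}) (hBcard : B.ncard = 2 * h + 2)
    (γ : Set Sh) (hγ : IsEmbeddedCircle γ) (hsym : ι '' γ = γ) :
    (∃ e : UnitInt ≃ₜ (π '' γ : Set S2),
      ((e UnitInt.zero : S2) ∈ B ∧ (e UnitInt.one : S2) ∈ B) ∧
      (∀ t : UnitInt, t ≠ UnitInt.zero → t ≠ UnitInt.one → (e t : S2) ∉ B) ∧
      (∀ z ∈ π '' γ,
        (z ∈ B → (γ ∩ (⇑π) ⁻¹' {z}).ncard = 1) ∧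
        (z ∉ B → (γ ∩ (⇑π) ⁻¹' {z}).ncard = 2)))
    ∨ (IsEmbeddedCircle (π '' γ) ∧ Disjoint (π '' γ) B ∧
        ∀ z ∈ π '' γ, (γ ∩ (⇑π) ⁻¹' {z}).ncard = 2) :=
  stmt_1_general h ι hinv π hfib B hB hBcard γ hγ hsym
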